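/- (Differential privacy of the exponential mechanism.) Let H be a finite nonempty set, let s be a score function assigning to each dataset D and each h ∈ H a real number, with sensitivity Δs = max over h ∈ H of the supremum over adjacent pairs D, D' of |s(D,h) − s(D',h)|, assumed finite and positive, and let ε > 0. The exponential mechanism M_exp, which on input D outputs each h ∈ H with probability exp(ε·s(D,h)/(2Δs)) / ∑_{h'∈H} exp(ε·s(D,h')/(2Δs)), is (ε,0)-differentially private. -/

import Mathlib

open MeasureTheory ENNReal

/-- Two datasets (finite multisets over a universe `U`) are adjacent under the
add/remove notion if their symmetric difference has cardinality 1. -/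
def Adjacent {U : Type*} [DecidableEq U] (D D' : Multiset U) : Prop :=
  Multiset.card ((D - D') + (D' - D)) = 1

/-- The probability that the exponential mechanism with score function `s`,
sensitivity `Δs` and privacy parameter `ε` outputs `h` on input dataset `D`:
`exp(ε·s(D,h)/(2Δs)) / ∑_{h'} exp(ε·s(D,h')/(2Δs))`. -/
noncomputable def expMechProb {U H : Type*} [Fintype H]
    (s : Multiset U → H → ℝ) (Δs ε : ℝ) (D : Multiset U) (h : H) : ℝ :=
  Real.exp (ε * s D h / (2 * Δs)) / ∑ h' : H, Real.exp (ε * s D h' / (2 * Δs))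

/-! The output probabilities of the exponential mechanism are Gibbs weights whose exponents move
by at most `ε / 2` between adjacent datasets. Such a shift changes the numerator `exp (f h)` by a
factor of at most `e^{ε/2}` and the partition function `∑ exp (f h')` by a factor of at least
`e^{-ε/2}`, so each probability grows by at most `e^ε`; summing over the event gives the bound. -/

theorem exp_div_sum_exp_le_exp_mul {ι : Type*} [Fintype ι] {f g : ι → ℝ} {c : ℝ}
    (hfg : ∀ j, |f j - g j| ≤ c) (i : ι) :
    Real.exp (f i) / ∑ j, Real.exp (f j) ≤
      Real.exp (2 * c) * (Real.exp (g i) / ∑ j, Real.exp (g j)) := by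
  have exp_le_of_sub_le {a b : ℝ} (h : a - b ≤ c) : Real.exp a ≤ Real.exp c * Real.exp b := by
    rw [← Real.exp_add, Real.exp_le_exp]; linarith
  have hnum : Real.exp (f i) ≤ Real.exp c * Real.exp (g i) :=
    exp_le_of_sub_le (abs_sub_le_iff.mp (hfg i)).1
  have hden : (Real.exp c)⁻¹ * ∑ j, Real.exp (g j) ≤ ∑ j, Real.exp (f j) := by
    rw [inv_mul_le_iff₀ (Real.exp_pos c), Finset.mul_sum]
    exact Finset.sum_le_sum fun j _ => exp_le_of_sub_le (abs_sub_le_iff.mp (hfg j)).2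
  have hpos : 0 < ∑ j, Real.exp (g j) :=
    Finset.sum_pos (fun j _ => Real.exp_pos _) ⟨i, Finset.mem_univ i⟩
  calc Real.exp (f i) / ∑ j, Real.exp (f j)
      ≤ Real.exp c * Real.exp (g i) / ((Real.exp c)⁻¹ * ∑ j, Real.exp (g j)) := by
        gcongr
    _ = Real.exp (2 * c) * (Real.exp (g i) / ∑ j, Real.exp (g j)) := by
        rw [two_mul, Real.exp_add]; field_simp

theorem expMechProb_le_exp_mul {U H : Type*} [Fintype H]
    {s : Multiset U → H → ℝ} {Δs ε : ℝ} (hΔ : 0 < Δs) (hε : 0 ≤ ε) {D D' : Multiset U}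
    (hsens : ∀ h, |s D h - s D' h| ≤ Δs) (h : H) :
    expMechProb s Δs ε D h ≤ Real.exp ε * expMechProb s Δs ε D' h := by
  have hexponent : ∀ j, |ε * s D j / (2 * Δs) - ε * s D' j / (2 * Δs)| ≤ ε / 2 := by
    intro j
    calc |ε * s D j / (2 * Δs) - ε * s D' j / (2 * Δs)|
        = ε / (2 * Δs) * |s D j - s D' j| := by
          rw [← abs_of_nonneg (by positivity : 0 ≤ ε / (2 * Δs)), ← abs_mul]; congr 1; ring
      _ ≤ ε / (2 * Δs) * Δs := by gcongr; exact hsens j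
      _ = ε / 2 := by field_simp
  have hgibbs := exp_div_sum_exp_le_exp_mul hexponent h
  rwa [mul_div_cancel₀ ε two_ne_zero] at hgibbs

theorem exponential_mechanism_dp_general {U H : Type*} [DecidableEq U] [Fintype H]
    (s : Multiset U → H → ℝ) (Δs ε : ℝ) (hΔ : 0 < Δs) (hε : 0 < ε)
    (hsens : ∀ (h : H) (D D' : Multiset U), Adjacent D D' → |s D h - s D' h| ≤ Δs) :
    ∀ (S : Finset H) (D D' : Multiset U), Adjacent D D' →
      ∑ h ∈ S, expMechProb s Δs ε D h ≤
        Real.exp ε * ∑ h ∈ S, expMechProb s Δs ε D' h := by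
  intro S D D' hadj
  rw [Finset.mul_sum]
  exact Finset.sum_le_sum fun h _ =>
    expMechProb_le_exp_mul hΔ hε.le (fun h => hsens h D D' hadj) h

/-- **Differential privacy of the exponential mechanism.** If `H` is a finite
nonempty set and the score function `s` has sensitivity at most `Δs > 0`
(i.e. `|s(D,h) − s(D',h)| ≤ Δs` for every `h` and every adjacent pair `D ∼ D'`),
then for every event `S ⊆ H` and every adjacent pair of datasets
`P[M_exp(D) ∈ S] ≤ e^ε · P[M_exp(D') ∈ S]`. -/
theorem exponential_mechanism_dp {U H : Type*} [DecidableEq U] [Fintype H] [Nonempty H]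
    (s : Multiset U → H → ℝ) (Δs ε : ℝ) (hΔ : 0 < Δs) (hε : 0 < ε)
    (hsens : ∀ (h : H) (D D' : Multiset U), Adjacent D D' → |s D h - s D' h| ≤ Δs) :
    ∀ (S : Finset H) (D D' : Multiset U), Adjacent D D' →
      ∑ h ∈ S, expMechProb s Δs ε D h ≤
        Real.exp ε * ∑ h ∈ S, expMechProb s Δs ε D' h :=
  exponential_mechanism_dp_general s Δs ε hΔ hε hsens
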